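/- If ρ is a simple root of p and the starting point z satisfies |z − ρ| < d/(4(n−1)) where d is the minimal distance from ρ to the other roots, then the radicand of Laguerre's formula is nonzero: (n−1)²p'(z)² − n(n−1)p(z)p''(z) ≠ 0. -/

import Mathlib

/-!
With `aⱼ = (z - ρⱼ)⁻¹`, `S₁ = ∑ aⱼ` and `S₂ = ∑ aⱼ²`, the logarithmic derivative gives
`p' = p S₁` and `p'' = p (S₁² - S₂)`, so the radicand is `p² (n - 1) (n S₂ - S₁²)`.
Splitting off `w = a_{i₀}`, `n S₂ - S₁² = (n - 1) w² - 2 w A + n B - A²` where `A`, `B` are the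
sums over the other roots. These lie at distance `≥ 3d/4` from `z`, so `‖A‖ ≤ (n-1) c` and
`‖B‖ ≤ (n-1) c²` with `c = 4/(3d)`, while `‖w‖ > 3 (n - 1) c`: the term `(n - 1) w²` dominates.
-/

open Finset

section LogDeriv

variable {𝕜 ι : Type*} [NontriviallyNormedField 𝕜] [DecidableEq ι] (s : Finset ι) (ρ : ι → 𝕜)

theorem deriv_prod_sub :
    deriv (fun z ↦ ∏ j ∈ s, (z - ρ j)) = fun z ↦ ∑ i ∈ s, ∏ j ∈ s.erase i, (z - ρ j) := by
  funext z
  simpa using ((HasDerivAt.fun_finsetProd (u := s) fun i _ ↦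
    (hasDerivAt_id z).sub_const (ρ i)).deriv)

variable {s ρ} {z : 𝕜}

theorem prod_erase_sub_eq_mul_inv (hz : ∀ j ∈ s, z ≠ ρ j) {i : ι} (hi : i ∈ s) :
    ∏ j ∈ s.erase i, (z - ρ j) = (∏ j ∈ s, (z - ρ j)) * (z - ρ i)⁻¹ := by
  rw [← mul_prod_erase s _ hi, mul_comm, inv_mul_cancel_left₀ (sub_ne_zero.2 (hz i hi))]

theorem deriv_prod_sub_eq_mul_sum_inv (hz : ∀ j ∈ s, z ≠ ρ j) :
    deriv (fun z ↦ ∏ j ∈ s, (z - ρ j)) z = (∏ j ∈ s, (z - ρ j)) * ∑ i ∈ s, (z - ρ i)⁻¹ := by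
  rw [deriv_prod_sub, mul_sum]
  exact sum_congr rfl fun i hi ↦ prod_erase_sub_eq_mul_inv hz hi

theorem deriv_deriv_prod_sub_eq (hz : ∀ j ∈ s, z ≠ ρ j) :
    deriv (deriv (fun z ↦ ∏ j ∈ s, (z - ρ j))) z =
      (∏ j ∈ s, (z - ρ j)) * ((∑ i ∈ s, (z - ρ i)⁻¹) ^ 2 - ∑ i ∈ s, ((z - ρ i)⁻¹) ^ 2) := by
  have hterm : ∀ i ∈ s, deriv (fun z ↦ ∏ j ∈ s.erase i, (z - ρ j)) z =
      (∏ j ∈ s, (z - ρ j)) * ((z - ρ i)⁻¹ * ∑ k ∈ s, (z - ρ k)⁻¹ - ((z - ρ i)⁻¹) ^ 2) := by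
    intro i hi
    rw [deriv_prod_sub_eq_mul_sum_inv fun j hj ↦ hz j (mem_of_mem_erase hj),
      prod_erase_sub_eq_mul_inv hz hi, ← add_sum_erase s _ hi]
    ring
  rw [deriv_prod_sub, deriv_fun_sum fun i _ ↦ by fun_prop, sum_congr rfl hterm, ← mul_sum,
    sum_sub_distrib, ← sum_mul]
  ring

end LogDeriv

/- Since `m c < W / 3`, the three terms on the left are below `2/3 W²`, `2/9 W²` and `1/9 W²`
(using `m + 1 ≤ 2 m`), which add up to `W² ≤ m W²`. -/
theorem cross_terms_lt_of_dominant (m c W a b : ℝ) (hm : 1 ≤ m) (ha0 : 0 ≤ a) (ha : a ≤ m * c)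
    (hb : b ≤ m * c ^ 2) (hW : 3 * m * c < W) :
    2 * W * a + (m + 1) * b + a ^ 2 < m * W ^ 2 := by
  have hmc : 0 ≤ m * c := ha0.trans ha
  have hW0 : 0 < W := by linarith
  have h1 : 2 * W * a < 2 / 3 * W ^ 2 := by nlinarith
  have hmcW : (m * c) ^ 2 ≤ 1 / 9 * W ^ 2 := by nlinarith
  have h2 : (m + 1) * b ≤ 2 / 9 * W ^ 2 := by
    nlinarith [mul_le_mul_of_nonneg_left hb (by linarith : (0 : ℝ) ≤ m + 1),
      mul_nonneg (mul_nonneg (sub_nonneg.2 hm) (by linarith : (0 : ℝ) ≤ m)) (sq_nonneg c)]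
  have h3 : a ^ 2 ≤ 1 / 9 * W ^ 2 := by nlinarith
  nlinarith

theorem norm_sum_le_card_mul {ι E : Type*} [SeminormedAddCommGroup E] {s : Finset ι} {f : ι → E}
    {c : ℝ} (h : ∀ i ∈ s, ‖f i‖ ≤ c) : ‖∑ i ∈ s, f i‖ ≤ #s * c :=
  (norm_sum_le_of_le s h).trans_eq (by rw [sum_const, nsmul_eq_mul])

theorem card_mul_sum_sq_sub_sq_sum_ne_zero {𝕜 ι : Type*} [RCLike 𝕜] [DecidableEq ι]
    {s : Finset ι} {a : ι → 𝕜} {i₀ : ι} (hi₀ : i₀ ∈ s) (hs : 2 ≤ #s) {c : ℝ}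
    (hc : ∀ j ∈ s.erase i₀, ‖a j‖ ≤ c) (hdom : 3 * ((#s : ℝ) - 1) * c < ‖a i₀‖) :
    (#s : 𝕜) * ∑ j ∈ s, a j ^ 2 - (∑ j ∈ s, a j) ^ 2 ≠ 0 := by
  set m := #(s.erase i₀)
  set A := ∑ j ∈ s.erase i₀, a j
  set B := ∑ j ∈ s.erase i₀, a j ^ 2
  have hcard : #s = m + 1 := (card_erase_add_one hi₀).symm
  have hsplit : (#s : 𝕜) * ∑ j ∈ s, a j ^ 2 - (∑ j ∈ s, a j) ^ 2 =
      m * a i₀ ^ 2 - (2 * a i₀ * A - (m + 1) * B + A ^ 2) := by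
    rw [← add_sum_erase s a hi₀, ← add_sum_erase s (a · ^ 2) hi₀, hcard]
    push_cast
    ring
  have hm : (1 : ℝ) ≤ m := by exact_mod_cast (by omega : 1 ≤ m)
  have hA : ‖A‖ ≤ m * c := norm_sum_le_card_mul hc
  have hB : ‖B‖ ≤ m * c ^ 2 := norm_sum_le_card_mul fun j hj ↦
    (norm_pow (a j) 2).trans_le (pow_le_pow_left₀ (norm_nonneg _) (hc j hj) 2)
  rw [hsplit, sub_ne_zero]
  intro h
  have hle : (m : ℝ) * ‖a i₀‖ ^ 2 ≤ 2 * ‖a i₀‖ * ‖A‖ + (m + 1) * ‖B‖ + ‖A‖ ^ 2 := by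
    calc (m : ℝ) * ‖a i₀‖ ^ 2 = ‖(m : 𝕜) * a i₀ ^ 2‖ := by
          rw [norm_mul, norm_pow, RCLike.norm_natCast]
      _ = ‖2 * a i₀ * A - (m + 1) * B + A ^ 2‖ := by rw [h]
      _ ≤ 2 * ‖a i₀‖ * ‖A‖ + (m + 1) * ‖B‖ + ‖A‖ ^ 2 := by
          refine (norm_add_le _ _).trans
            (add_le_add ((norm_sub_le _ _).trans (add_le_add ?_ ?_)) ?_)
          · rw [norm_mul, norm_mul, RCLike.norm_ofNat]
          · rw [norm_mul, ← Nat.cast_succ, RCLike.norm_natCast, Nat.cast_succ]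
          · rw [norm_pow]
  rw [hcard] at hdom
  push_cast at hdom
  exact (cross_terms_lt_of_dominant m c ‖a i₀‖ ‖A‖ ‖B‖ hm (norm_nonneg _) hA hB
    (by linarith)).not_ge hle

theorem three_mul_div_four_le_norm_sub {E : Type*} [SeminormedAddCommGroup E] {z ρ₀ ρ₁ : E}
    {d : ℝ} (hsep : d ≤ ‖ρ₀ - ρ₁‖) (hnear : ‖z - ρ₀‖ ≤ d / 4) : 3 * d / 4 ≤ ‖z - ρ₁‖ := by
  have := norm_sub_le_norm_sub_add_norm_sub ρ₀ z ρ₁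
  rw [norm_sub_rev ρ₀ z] at this
  linarith

theorem div_four_mul_sub_one_le_div_four {d x : ℝ} (hd : 0 ≤ d) (hx : 2 ≤ x) :
    d / (4 * (x - 1)) ≤ d / 4 :=
  div_le_div_of_nonneg_left hd (by norm_num) (by linarith)

theorem card_mul_sum_inv_sq_sub_sq_sum_inv_ne_zero {𝕜 ι : Type*} [RCLike 𝕜] [DecidableEq ι]
    {s : Finset ι} {ρ : ι → 𝕜} {i₀ : ι} (hi₀ : i₀ ∈ s) (hs : 2 ≤ #s) {d : ℝ} (hd : 0 < d)
    (hsep : ∀ j ∈ s.erase i₀, d ≤ ‖ρ i₀ - ρ j‖) {z : 𝕜} (hz : z ≠ ρ i₀)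
    (hclose : ‖z - ρ i₀‖ < d / (4 * ((#s : ℝ) - 1))) :
    (#s : 𝕜) * ∑ j ∈ s, ((z - ρ j)⁻¹) ^ 2 - (∑ j ∈ s, (z - ρ j)⁻¹) ^ 2 ≠ 0 := by
  have hnear : ‖z - ρ i₀‖ ≤ d / 4 :=
    hclose.le.trans (div_four_mul_sub_one_le_div_four hd.le (by exact_mod_cast hs))
  refine card_mul_sum_sq_sub_sq_sum_ne_zero hi₀ hs (c := 4 / (3 * d)) (fun j hj ↦ ?_) ?_
  · rw [norm_inv, ← inv_div]
    exact inv_anti₀ (by positivity) (three_mul_div_four_le_norm_sub (hsep j hj) hnear)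
  rw [norm_inv]
  calc 3 * ((#s : ℝ) - 1) * (4 / (3 * d)) = (d / (4 * ((#s : ℝ) - 1)))⁻¹ := by field_simp
    _ < ‖z - ρ i₀‖⁻¹ := inv_strictAnti₀ (norm_pos_iff.2 (sub_ne_zero.2 hz)) hclose

theorem laguerre_radicand_eq {R : Type*} [CommRing R] (n P S₁ S₂ : R) :
    (n - 1) ^ 2 * (P * S₁) ^ 2 - n * (n - 1) * P * (P * (S₁ ^ 2 - S₂)) =
      P ^ 2 * ((n - 1) * (n * S₂ - S₁ ^ 2)) := by
  ring

theorem laguerre_radicand_ne_zero_near_simple_root_general (n : ℕ) (hn : 2 ≤ n)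
    (ρ : Fin n → ℂ) (i₀ : Fin n)
    (p : ℂ → ℂ) (hp : ∀ z, p z = ∏ j, (z - ρ j))
    (d : ℝ) (hd : 0 < d) (hsep : ∀ j, j ≠ i₀ → d ≤ ‖ρ i₀ - ρ j‖)
    (z : ℂ) (hz : z ≠ ρ i₀) (hclose : ‖z - ρ i₀‖ < d / (4 * ((n : ℝ) - 1))) :
    ((n : ℂ) - 1) ^ 2 * (deriv p z) ^ 2
      - (n : ℂ) * ((n : ℂ) - 1) * p z * deriv (deriv p) z ≠ 0 := by
  have hnear : ‖z - ρ i₀‖ ≤ d / 4 :=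
    hclose.le.trans (div_four_mul_sub_one_le_div_four hd.le (by exact_mod_cast hn))
  have hroot : ∀ j ∈ univ, z ≠ ρ j := by
    intro j _
    rcases eq_or_ne j i₀ with rfl | hj
    · exact hz
    · rintro rfl
      have := three_mul_div_four_le_norm_sub (hsep j hj) hnear
      rw [sub_self, norm_zero] at this
      linarith
  rw [show p = fun z ↦ ∏ j, (z - ρ j) from funext hp, deriv_prod_sub_eq_mul_sum_inv hroot,
    deriv_deriv_prod_sub_eq hroot, laguerre_radicand_eq]
  refine mul_ne_zero (pow_ne_zero _ (prod_ne_zero_iff.2 fun j hj ↦ sub_ne_zero.2 (hroot j hj)))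
    (mul_ne_zero (sub_ne_zero.2 (by exact_mod_cast (by omega : n ≠ 1))) ?_)
  simpa using card_mul_sum_inv_sq_sub_sq_sum_inv_ne_zero (mem_univ i₀) (by simpa using hn) hd
    (fun j hj ↦ hsep j (ne_of_mem_erase hj)) hz (by simpa using hclose)

/-- If `z` is within `d/(4(n-1))` of a simple root `ρ i₀` (where `d` is the minimal
distance from `ρ i₀` to the other roots), the Laguerre radicand is nonzero. -/
theorem laguerre_radicand_ne_zero_near_simple_root (n : ℕ) (hn : 2 ≤ n)
    (ρ : Fin n → ℂ) (i₀ : Fin n) (hsimple : ∀ j, j ≠ i₀ → ρ j ≠ ρ i₀)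
    (p : ℂ → ℂ) (hp : ∀ z, p z = ∏ j, (z - ρ j))
    (d : ℝ) (hd : 0 < d) (hsep : ∀ j, j ≠ i₀ → d ≤ ‖ρ i₀ - ρ j‖)
    (z : ℂ) (hz : z ≠ ρ i₀) (hclose : ‖z - ρ i₀‖ < d / (4 * ((n : ℝ) - 1))) :
    ((n : ℂ) - 1) ^ 2 * (deriv p z) ^ 2
      - (n : ℂ) * ((n : ℂ) - 1) * p z * deriv (deriv p) z ≠ 0 :=
  laguerre_radicand_ne_zero_near_simple_root_general n hn ρ i₀ p hp d hd hsep z hz hclose
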